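/- arXiv:1305.2986 — 4 statements merged into one kernel-verified Lean document; each statement's English description precedes it below -/
import Mathlib

section
/- Let D = (V,E) be a directed graph with m edges, let ε > 0, let A ⊂ V with a given partition A = A1 ∪ A2, let B = V \ A, and suppose every vertex of B has total degree at most (ε²/4)·m. Then for any p ∈ [0,1] there exists a bipartition V = V1 ∪ V2 with A1 ⊆ V1 and A2 ⊆ V2 such that e(V1,V2) ≥ e(A1,A2) + (1−p)·e(A1,B) + p·e(B,A2) + p(1−p)·e(B) − εm and e(V2,V1) ≥ e(A2,A1) + p·e(A2,B) + (1−p)·e(B,A1) + p(1−p)·e(B) − εm. -/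
/-!
Take `V₁ = A₁ ∪ S`, where `S ⊆ B` contains each vertex independently with probability `p`.
A vertex then lies in `V₁` with probability `q v = sideProb p A₁ B v` (`1` on `A₁`, `0` on `A₂`,
`p` on `B`), and the right-hand sides, without the `εm`, are the expected cut
`fracCut E q = ∑_{uv ∈ E} q u (1 - q v)` and its analogue for the reversed arcs. The deviation of an arc's contribution from its mean depends
only on its endpoints in `B` and has mean zero, so two arcs without a common endpoint in `B`
contribute nothing to the variance of the cut and every other pair at most `1`. Hence each
variance is at most `∑_{v ∈ B} d(v)² ≤ (ε²m/4) · 2m`, the two together at most `ε²m²`, and for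
some `S` both deviations are at most `εm`.
-/

open Finset

def eCount {V : Type*} [DecidableEq V] (E : V → V → Prop) [DecidableRel E]
    (X Y : Finset V) : ℕ :=
  ((X ×ˢ Y).filter fun p => E p.1 p.2).card

def outDeg {V : Type*} [Fintype V] (E : V → V → Prop) [DecidableRel E] (v : V) : ℕ :=
  (Finset.univ.filter fun w => E v w).card

def inDeg {V : Type*} [Fintype V] (E : V → V → Prop) [DecidableRel E] (v : V) : ℕ :=
  (Finset.univ.filter fun w => E w v).card

def totDeg {V : Type*} [Fintype V] (E : V → V → Prop) [DecidableRel E] (v : V) : ℕ :=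
  inDeg E v + outDeg E v

section RandomSubset

variable {α : Type*} [DecidableEq α] {p : ℝ}

noncomputable def subsetWeight (p : ℝ) (U S : Finset α) : ℝ :=
  ∏ v ∈ U, if v ∈ S then p else 1 - p

noncomputable def subsetExpect (p : ℝ) (U : Finset α) (f : Finset α → ℝ) : ℝ :=
  ∑ S ∈ U.powerset, subsetWeight p U S * f S

lemma subsetWeight_nonneg (hp0 : 0 ≤ p) (hp1 : p ≤ 1) (U S : Finset α) :
    0 ≤ subsetWeight p U S :=
  prod_nonneg fun v _ => by split_ifs <;> linarith

lemma sum_subsetWeight (p : ℝ) (U : Finset α) : ∑ S ∈ U.powerset, subsetWeight p U S = 1 := by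
  have h := prod_add (fun _ => p) (fun _ => 1 - p) U
  simp only [add_sub_cancel, prod_const_one] at h
  rw [h]
  refine sum_congr rfl fun S hS => ?_
  rw [subsetWeight, prod_ite, filter_mem_eq_inter, inter_eq_right.2 (mem_powerset.1 hS),
    filter_notMem_eq_sdiff]

lemma subsetWeight_union {s t : Finset α} (hd : Disjoint s t) (S : Finset α) :
    subsetWeight p (s ∪ t) S = subsetWeight p s S * subsetWeight p t S :=
  prod_union hd

lemma subsetWeight_inter_self (s S : Finset α) : subsetWeight p s (S ∩ s) = subsetWeight p s S :=
  prod_congr rfl fun v hv => by simp [hv]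

variable {U : Finset α} {f g : Finset α → ℝ}

lemma subsetExpect_congr (h : ∀ S ⊆ U, f S = g S) : subsetExpect p U f = subsetExpect p U g :=
  sum_congr rfl fun S hS => by rw [h S (mem_powerset.1 hS)]

lemma subsetExpect_const (p : ℝ) (U : Finset α) (c : ℝ) : subsetExpect p U (fun _ => c) = c := by
  rw [subsetExpect, ← sum_mul, sum_subsetWeight, one_mul]

lemma subsetExpect_add :
    subsetExpect p U (fun S => f S + g S) = subsetExpect p U f + subsetExpect p U g := by
  simp only [subsetExpect, mul_add, sum_add_distrib]

lemma subsetExpect_sub :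
    subsetExpect p U (fun S => f S - g S) = subsetExpect p U f - subsetExpect p U g := by
  simp only [subsetExpect, mul_sub, sum_sub_distrib]

lemma subsetExpect_sum {ι : Type*} (s : Finset ι) (F : ι → Finset α → ℝ) :
    subsetExpect p U (fun S => ∑ i ∈ s, F i S) = ∑ i ∈ s, subsetExpect p U (F i) := by
  simp only [subsetExpect, mul_sum]
  exact sum_comm

lemma subsetExpect_mono (hp0 : 0 ≤ p) (hp1 : p ≤ 1) (h : ∀ S ⊆ U, f S ≤ g S) :
    subsetExpect p U f ≤ subsetExpect p U g :=
  sum_le_sum fun S hS => mul_le_mul_of_nonneg_left (h S (mem_powerset.1 hS))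
    (subsetWeight_nonneg hp0 hp1 U S)

lemma exists_le_of_subsetExpect_le (hp0 : 0 ≤ p) (hp1 : p ≤ 1) {C : ℝ}
    (h : subsetExpect p U f ≤ C) : ∃ S ⊆ U, f S ≤ C := by
  by_contra! hlt
  have : subsetExpect p U (fun _ => C) < subsetExpect p U f := by
    obtain ⟨S₀, hS₀, hpos⟩ : ∃ S ∈ U.powerset, 0 < subsetWeight p U S := by
      by_contra! h0
      have := sum_subsetWeight p U
      linarith [sum_nonpos h0]
    exact sum_lt_sum (fun S hS => mul_le_mul_of_nonneg_left (hlt S (mem_powerset.1 hS)).le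
      (subsetWeight_nonneg hp0 hp1 U S))
      ⟨S₀, hS₀, mul_lt_mul_of_pos_left (hlt S₀ (mem_powerset.1 hS₀)) hpos⟩
  rw [subsetExpect_const] at this
  linarith

lemma subsetExpect_union {s t : Finset α} (hd : Disjoint s t) (F : Finset α → ℝ) :
    subsetExpect p (s ∪ t) F = ∑ S₁ ∈ s.powerset, ∑ S₂ ∈ t.powerset,
      subsetWeight p s S₁ * subsetWeight p t S₂ * F (S₁ ∪ S₂) := by
  rw [← sum_product']
  refine sum_nbij' (fun S => (S ∩ s, S ∩ t)) (fun P => P.1 ∪ P.2) ?_ ?_ ?_ ?_ ?_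
  · intro S hS
    simp [inter_subset_right]
  · intro P hP
    simp only [mem_product, mem_powerset] at hP ⊢
    exact union_subset_union hP.1 hP.2
  · intro S hS
    simp only [mem_powerset] at hS
    simp [← inter_union_distrib_left, inter_eq_left.2 hS]
  · intro P hP
    simp only [mem_product, mem_powerset] at hP
    ext x <;> simp <;> grind [disjoint_left]
  · intro S hS
    simp only [mem_powerset] at hS
    simp [subsetWeight_union hd, subsetWeight_inter_self, ← inter_union_distrib_left,
      inter_eq_left.2 hS]

lemma subsetExpect_eq_of_subset {T : Finset α} (hTU : T ⊆ U) (hf : ∀ S ⊆ U, f S = f (S ∩ T)) :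
    subsetExpect p U f = subsetExpect p T f := by
  rw [← union_sdiff_of_subset hTU, subsetExpect_union disjoint_sdiff, subsetExpect]
  refine sum_congr rfl fun S₁ hS₁ => ?_
  rw [mem_powerset] at hS₁
  have hf' : ∀ S₂ ∈ (U \ T).powerset, f (S₁ ∪ S₂) = f S₁ := fun S₂ hS₂ => by
    rw [mem_powerset] at hS₂
    rw [hf _ (union_subset (hS₁.trans hTU) (hS₂.trans sdiff_subset))]
    congr 1
    ext x; simp only [mem_inter, mem_union]
    grind
  rw [sum_congr rfl fun S₂ hS₂ => by rw [hf' S₂ hS₂, mul_right_comm], ← mul_sum,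
    sum_subsetWeight, mul_one]

lemma subsetExpect_mul_of_disjoint {T₁ T₂ : Finset α} (h₁ : T₁ ⊆ U) (h₂ : T₂ ⊆ U)
    (hd : Disjoint T₁ T₂) (hf : ∀ S ⊆ U, f S = f (S ∩ T₁)) (hg : ∀ S ⊆ U, g S = g (S ∩ T₂)) :
    subsetExpect p U (fun S => f S * g S) = subsetExpect p U f * subsetExpect p U g := by
  have hT : T₁ ∪ T₂ ⊆ U := union_subset h₁ h₂
  rw [subsetExpect_eq_of_subset h₁ hf, subsetExpect_eq_of_subset h₂ hg,
    subsetExpect_eq_of_subset hT fun S hS => by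
      rw [hf S hS, hg S hS, hf (S ∩ (T₁ ∪ T₂)) (inter_subset_left.trans hS),
        hg (S ∩ (T₁ ∪ T₂)) (inter_subset_left.trans hS),
        inter_assoc, inter_assoc, union_inter_cancel_left, union_inter_cancel_right],
    subsetExpect_union hd, subsetExpect, subsetExpect, sum_mul_sum]
  refine sum_congr rfl fun S₁ hS₁ => sum_congr rfl fun S₂ hS₂ => ?_
  rw [mem_powerset] at hS₁ hS₂
  have hU : S₁ ∪ S₂ ⊆ U := union_subset (hS₁.trans h₁) (hS₂.trans h₂)
  have e₁ : (S₁ ∪ S₂) ∩ T₁ = S₁ := by ext x; grind [disjoint_left]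
  have e₂ : (S₁ ∪ S₂) ∩ T₂ = S₂ := by ext x; grind [disjoint_left]
  rw [hf _ hU, hg _ hU, e₁, e₂]
  ring

lemma subsetExpect_ite_mem {u : α} (hu : u ∈ U) :
    subsetExpect p U (fun S => if u ∈ S then 1 else 0) = p := by
  rw [subsetExpect_eq_of_subset (singleton_subset_iff.2 hu) fun S _ => by simp, subsetExpect,
    ← insert_empty_eq, sum_powerset_insert (notMem_empty u)]
  simp [subsetWeight]

end RandomSubset

section Digraph

variable {V : Type*} (E : V → V → Prop) [DecidableRel E]

section

variable [DecidableEq V]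

lemma eCount_eq_sum_sum (X Y : Finset V) :
    eCount E X Y = ∑ u ∈ X, ∑ v ∈ Y, if E u v then 1 else 0 := by
  rw [eCount, card_filter, sum_product]

lemma eCount_swap (X Y : Finset V) : eCount (fun u v => E v u) X Y = eCount E Y X := by
  rw [eCount_eq_sum_sum, eCount_eq_sum_sum, sum_comm]

end

variable [Fintype V]

lemma totDeg_swap (v : V) : totDeg (fun u v => E v u) v = totDeg E v :=
  add_comm _ _

def arcs : Finset (V × V) := univ.filter fun e => E e.1 e.2

lemma sum_arcs_eq {M : Type*} [AddCommMonoid M] (g : V × V → M) :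
    ∑ e ∈ arcs E, g e = ∑ u, ∑ w, if E u w then g (u, w) else 0 := by
  rw [arcs, sum_filter, ← univ_product_univ, sum_product]

variable [DecidableEq V]

lemma eCount_univ_univ : eCount E univ univ = #(arcs E) := by
  rw [eCount, univ_product_univ, arcs]

lemma eCount_eq_sum_arcs (X Y : Finset V) : (eCount E X Y : ℝ) =
    ∑ e ∈ arcs E, (if e.1 ∈ X then 1 else 0) * (if e.2 ∈ Y then 1 else 0) := by
  have h : (X ×ˢ Y).filter (fun e => E e.1 e.2) =
      (arcs E).filter fun e => e.1 ∈ X ∧ e.2 ∈ Y := by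
    ext e; simp [arcs, and_comm]
  simp only [eCount, h, card_filter, Nat.cast_sum, Nat.cast_ite, Nat.cast_one, Nat.cast_zero,
    ite_zero_mul_ite_zero, mul_one]

lemma sum_arcs_fst_eq (v : V) : ∑ e ∈ arcs E, (if e.1 = v then (1 : ℝ) else 0) = outDeg E v := by
  rw [sum_arcs_eq, outDeg, card_filter, Nat.cast_sum,
    Fintype.sum_eq_single v fun u hu => by simp [hu]]
  simp

lemma sum_arcs_snd_eq (v : V) : ∑ e ∈ arcs E, (if e.2 = v then (1 : ℝ) else 0) = inDeg E v := by
  rw [sum_arcs_eq, sum_comm, inDeg, card_filter, Nat.cast_sum,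
    Fintype.sum_eq_single v fun w hw => by simp [hw]]
  simp

lemma sum_totDeg : ∑ v, (totDeg E v : ℝ) = 2 * eCount E univ univ := by
  simp only [totDeg, Nat.cast_add, sum_add_distrib, ← sum_arcs_fst_eq, ← sum_arcs_snd_eq]
  rw [sum_comm, sum_comm (γ := V)]
  simp [eCount_univ_univ]
  ring

lemma sum_arcs_incident_le (v : V) :
    ∑ e ∈ arcs E, (if v ∈ ({e.1, e.2} : Finset V) then (1 : ℝ) else 0) ≤ totDeg E v := by
  rw [totDeg, Nat.cast_add, ← sum_arcs_fst_eq, ← sum_arcs_snd_eq, add_comm, ← sum_add_distrib]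
  refine sum_le_sum fun e _ => ?_
  simp only [mem_insert, mem_singleton]
  split_ifs <;> grind

lemma sum_arcs_meet_le (B : Finset V) :
    ∑ e ∈ arcs E, ∑ e' ∈ arcs E,
      (if Disjoint ({e.1, e.2} ∩ B) ({e'.1, e'.2} ∩ B) then (0 : ℝ) else 1)
      ≤ ∑ v ∈ B, (totDeg E v : ℝ) ^ 2 := by
  set inc : V → V × V → ℝ := fun v e => if v ∈ ({e.1, e.2} : Finset V) then 1 else 0
  have inc_nonneg : ∀ v e, 0 ≤ inc v e := fun v e => by positivity
  calc _ ≤ ∑ e ∈ arcs E, ∑ e' ∈ arcs E, ∑ v ∈ B, inc v e * inc v e' := by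
        gcongr with e _ e' _
        split_ifs with hd
        · exact sum_nonneg fun v _ => mul_nonneg (inc_nonneg v e) (inc_nonneg v e')
        · obtain ⟨v, hv, hv'⟩ := not_disjoint_iff.1 hd
          rw [mem_inter] at hv hv'
          calc 1 = inc v e * inc v e' := by
                simp only [inc]; rw [if_pos hv.1, if_pos hv'.1, mul_one]
            _ ≤ _ := single_le_sum (fun w _ => mul_nonneg (inc_nonneg w e) (inc_nonneg w e')) hv.2
    _ = ∑ v ∈ B, (∑ e ∈ arcs E, inc v e) ^ 2 := by
        simp_rw [sq, sum_mul_sum]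
        exact (sum_congr rfl fun e _ => sum_comm).trans sum_comm
    _ ≤ _ := by
        gcongr with v
        exact sum_arcs_incident_le E v

noncomputable def fracCut (x : V → ℝ) : ℝ := ∑ e ∈ arcs E, x e.1 * (1 - x e.2)

lemma eCount_compl_eq_fracCut (X : Finset V) :
    (eCount E X Xᶜ : ℝ) = fracCut E fun v => if v ∈ X then 1 else 0 := by
  rw [eCount_eq_sum_arcs, fracCut]
  refine sum_congr rfl fun e _ => ?_
  by_cases h : e.2 ∈ X <;> simp [h]

end Digraph

section Rounding

variable {V : Type*} [DecidableEq V] {A₁ B : Finset V} {p : ℝ}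

noncomputable def sideProb (p : ℝ) (A₁ B : Finset V) (v : V) : ℝ :=
  if v ∈ A₁ then 1 else if v ∈ B then p else 0

lemma sideProb_mem_Icc (hp0 : 0 ≤ p) (hp1 : p ≤ 1) (v : V) :
    sideProb p A₁ B v ∈ Set.Icc 0 1 := by
  unfold sideProb; split_ifs <;> simp [hp0, hp1]

lemma subsetExpect_ite_mem_union (v : V) :
    subsetExpect p B (fun S => if v ∈ A₁ ∪ S then 1 else 0) = sideProb p A₁ B v := by
  by_cases h₁ : v ∈ A₁
  · rw [subsetExpect_congr (g := fun _ => 1) fun S _ => by simp [h₁], subsetExpect_const,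
      sideProb, if_pos h₁]
  by_cases hB : v ∈ B
  · rw [subsetExpect_congr (g := fun S => if v ∈ S then 1 else 0) fun S _ => by simp [h₁],
      subsetExpect_ite_mem hB, sideProb, if_neg h₁, if_pos hB]
  · have hS : ∀ S ⊆ B, v ∉ S := fun S hS h => hB (hS h)
    rw [subsetExpect_congr (g := fun _ => 0) fun S hS' => by simp [h₁, hS S hS'],
      subsetExpect_const, sideProb, if_neg h₁, if_neg hB]

lemma mem_union_iff_mem_union_inter {S T : Finset V} (hS : S ⊆ B) {v : V}
    (hv : v ∈ B → v ∈ T) :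
    v ∈ A₁ ∪ S ↔ v ∈ A₁ ∪ S ∩ T := by
  have := @hS v
  simp only [mem_union, mem_inter]
  tauto

noncomputable def roundingError (p : ℝ) (A₁ B : Finset V) (e : V × V) (S : Finset V) : ℝ :=
  (if e.1 ∈ A₁ ∪ S then 1 else 0) * (1 - if e.2 ∈ A₁ ∪ S then 1 else 0)
    - sideProb p A₁ B e.1 * (1 - sideProb p A₁ B e.2)

lemma roundingError_eq_inter (e : V × V) {S : Finset V} (hS : S ⊆ B) :
    roundingError p A₁ B e S = roundingError p A₁ B e (S ∩ ({e.1, e.2} ∩ B)) := by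
  simp only [roundingError,
    mem_union_iff_mem_union_inter hS (T := {e.1, e.2} ∩ B) (v := e.1) (by simp_all),
    mem_union_iff_mem_union_inter hS (T := {e.1, e.2} ∩ B) (v := e.2) (by simp_all)]

lemma subsetExpect_roundingError {e : V × V} (he : e.1 ≠ e.2) :
    subsetExpect p B (roundingError p A₁ B e) = 0 := by
  have hind := subsetExpect_mul_of_disjoint (p := p) (U := B) (T₁ := {e.1} ∩ B) (T₂ := {e.2} ∩ B)
    (f := fun S => if e.1 ∈ A₁ ∪ S then 1 else 0)
    (g := fun S => 1 - if e.2 ∈ A₁ ∪ S then 1 else 0) inter_subset_right inter_subset_right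
    ((disjoint_singleton.2 he).mono inter_subset_left inter_subset_left)
    (fun S hS => by
      simp only [mem_union_iff_mem_union_inter hS fun h => mem_inter.2 ⟨mem_singleton_self _, h⟩])
    (fun S hS => by
      simp only [mem_union_iff_mem_union_inter hS fun h => mem_inter.2 ⟨mem_singleton_self _, h⟩])
  unfold roundingError
  rw [subsetExpect_sub, hind, subsetExpect_sub, subsetExpect_const, subsetExpect_const,
    subsetExpect_ite_mem_union, subsetExpect_ite_mem_union, sub_self]

lemma abs_roundingError_le_one (hp0 : 0 ≤ p) (hp1 : p ≤ 1) (e : V × V) (S : Finset V) :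
    |roundingError p A₁ B e S| ≤ 1 := by
  have hx : ∀ v : V, (if v ∈ A₁ ∪ S then 1 else 0 : ℝ) ∈ Set.Icc 0 1 := fun v => by
    split_ifs <;> simp
  have hprod : ∀ x : V → ℝ, (∀ v, x v ∈ Set.Icc 0 1) → x e.1 * (1 - x e.2) ∈ Set.Icc 0 1 :=
    fun x h => unitInterval.mul_mem (h e.1) (Set.Icc.mem_iff_one_sub_mem.1 (h e.2))
  obtain ⟨h₁, h₂⟩ := hprod _ hx
  obtain ⟨h₃, h₄⟩ := hprod _ (sideProb_mem_Icc (A₁ := A₁) (B := B) hp0 hp1)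
  exact abs_sub_le_iff.2 ⟨by linarith, by linarith⟩

lemma subsetExpect_roundingError_mul_le (hp0 : 0 ≤ p) (hp1 : p ≤ 1) {e : V × V}
    (he : e.1 ≠ e.2) (e' : V × V) :
    subsetExpect p B (fun S => roundingError p A₁ B e S * roundingError p A₁ B e' S)
      ≤ if Disjoint ({e.1, e.2} ∩ B) ({e'.1, e'.2} ∩ B) then 0 else 1 := by
  split_ifs with hd
  · rw [subsetExpect_mul_of_disjoint (f := roundingError p A₁ B e) (g := roundingError p A₁ B e')
      inter_subset_right inter_subset_right hd (fun S hS => roundingError_eq_inter e hS)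
      (fun S hS => roundingError_eq_inter e' hS),
      subsetExpect_roundingError he, zero_mul]
  · calc _ ≤ subsetExpect p B fun _ => 1 := subsetExpect_mono hp0 hp1 fun S _ => by
          refine (le_abs_self _).trans ?_
          rw [abs_mul]
          exact mul_le_one₀ (abs_roundingError_le_one hp0 hp1 e S) (abs_nonneg _)
            (abs_roundingError_le_one hp0 hp1 e' S)
      _ = 1 := subsetExpect_const p B 1

end Rounding

section SecondMoment

variable {V : Type*} [Fintype V] [DecidableEq V] (E : V → V → Prop) [DecidableRel E]

lemma fracCut_sideProb {A₁ A₂ B : Finset V} (hA : Disjoint A₁ A₂) (hB : B = (A₁ ∪ A₂)ᶜ) (p : ℝ) :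
    fracCut E (sideProb p A₁ B) = eCount E A₁ A₂ + (1 - p) * eCount E A₁ B
      + p * eCount E B A₂ + p * (1 - p) * eCount E B B := by
  have hcases : ∀ v, (v ∈ A₁ ∧ v ∉ A₂ ∧ v ∉ B) ∨ (v ∉ A₁ ∧ v ∈ A₂ ∧ v ∉ B) ∨
      (v ∉ A₁ ∧ v ∉ A₂ ∧ v ∈ B) := fun v => by
    have := @disjoint_left.1 hA v
    subst hB; by_cases v ∈ A₁ <;> by_cases v ∈ A₂ <;> simp_all
  simp only [fracCut, eCount_eq_sum_arcs, mul_sum, ← sum_add_distrib]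
  refine sum_congr rfl fun e _ => ?_
  rcases hcases e.1 with h₁ | h₁ | h₁ <;> rcases hcases e.2 with h₂ | h₂ | h₂ <;>
    simp [sideProb, h₁, h₂]

variable (A₁ B : Finset V) {p : ℝ}

lemma eCount_sub_fracCut_eq_sum_roundingError (S : Finset V) :
    (eCount E (A₁ ∪ S) (A₁ ∪ S)ᶜ : ℝ) - fracCut E (sideProb p A₁ B)
      = ∑ e ∈ arcs E, roundingError p A₁ B e S := by
  rw [eCount_compl_eq_fracCut, fracCut, fracCut, ← sum_sub_distrib]
  rfl

theorem subsetExpect_sq_eCount_sub_fracCut_le (hirr : ∀ v, ¬E v v) (hp0 : 0 ≤ p)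
    (hp1 : p ≤ 1) :
    subsetExpect p B (fun S => ((eCount E (A₁ ∪ S) (A₁ ∪ S)ᶜ : ℝ)
      - fracCut E (sideProb p A₁ B)) ^ 2) ≤ ∑ v ∈ B, (totDeg E v : ℝ) ^ 2 := by
  have hloop : ∀ e ∈ arcs E, e.1 ≠ e.2 := fun e he h => by
    rw [arcs, mem_filter, h] at he
    exact hirr _ he.2
  calc _ = ∑ e ∈ arcs E, ∑ e' ∈ arcs E, subsetExpect p B
        (fun S => roundingError p A₁ B e S * roundingError p A₁ B e' S) := by
        simp_rw [eCount_sub_fracCut_eq_sum_roundingError, sq, sum_mul_sum, subsetExpect_sum]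
    _ ≤ ∑ e ∈ arcs E, ∑ e' ∈ arcs E,
        (if Disjoint ({e.1, e.2} ∩ B) ({e'.1, e'.2} ∩ B) then (0 : ℝ) else 1) :=
      sum_le_sum fun e he => sum_le_sum fun e' _ =>
        subsetExpect_roundingError_mul_le hp0 hp1 (hloop e he) e'
    _ ≤ _ := sum_arcs_meet_le E B

lemma sum_sq_totDeg_le {c : ℝ} (hc : 0 ≤ c) (hdeg : ∀ v ∈ B, (totDeg E v : ℝ) ≤ c) :
    ∑ v ∈ B, (totDeg E v : ℝ) ^ 2 ≤ c * (2 * eCount E univ univ) := by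
  calc ∑ v ∈ B, (totDeg E v : ℝ) ^ 2 ≤ ∑ v ∈ B, c * totDeg E v :=
        sum_le_sum fun v hv => by
          rw [sq]; exact mul_le_mul_of_nonneg_right (hdeg v hv) (by positivity)
    _ ≤ ∑ v, c * totDeg E v :=
        sum_le_sum_of_subset_of_nonneg (subset_univ B) fun v _ _ => by positivity
    _ = c * (2 * eCount E univ univ) := by rw [← mul_sum, sum_totDeg]

theorem subsetExpect_sq_sub_fracCut_le_of_totDeg_le (hirr : ∀ v, ¬E v v) (hp0 : 0 ≤ p)
    (hp1 : p ≤ 1) {c : ℝ} (hc : 0 ≤ c) (hdeg : ∀ v ∈ B, (totDeg E v : ℝ) ≤ c) :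
    subsetExpect p B (fun S => ((eCount E (A₁ ∪ S) (A₁ ∪ S)ᶜ : ℝ)
      - fracCut E (sideProb p A₁ B)) ^ 2) ≤ c * (2 * eCount E univ univ) :=
  (subsetExpect_sq_eCount_sub_fracCut_le E A₁ B hirr hp0 hp1).trans
    (sum_sq_totDeg_le E B hc hdeg)

end SecondMoment

/-- Lemma 2.2: if every vertex of `B` has total degree at most `(ε²/4)·m`, then
for any `p ∈ [0,1]` there is a bipartition `V = V₁ ∪ V₂` extending `A₁, A₂` with
`e(V₁,V₂) ≥ e(A₁,A₂) + (1-p)e(A₁,B) + p·e(B,A₂) + p(1-p)e(B) - εm` and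
`e(V₂,V₁) ≥ e(A₂,A₁) + p·e(A₂,B) + (1-p)e(B,A₁) + p(1-p)e(B) - εm`. -/
theorem stmt4 {V : Type*} [Fintype V] [DecidableEq V]
    (E : V → V → Prop) [DecidableRel E] (hirr : ∀ v, ¬ E v v)
    (ε : ℝ) (hε : 0 < ε)
    (A1 A2 : Finset V) (hA : Disjoint A1 A2) (B : Finset V)
    (hB : B = (A1 ∪ A2)ᶜ)
    (m : ℕ) (hm : m = eCount E Finset.univ Finset.univ)
    (hdeg : ∀ v ∈ B, (totDeg E v : ℝ) ≤ ε ^ 2 / 4 * m)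
    (p : ℝ) (hp0 : 0 ≤ p) (hp1 : p ≤ 1) :
    ∃ V1 : Finset V, A1 ⊆ V1 ∧ A2 ⊆ V1ᶜ ∧
      (eCount E V1 V1ᶜ : ℝ)
        ≥ (eCount E A1 A2 : ℝ) + (1 - p) * (eCount E A1 B : ℝ)
          + p * (eCount E B A2 : ℝ) + p * (1 - p) * (eCount E B B : ℝ)
          - ε * m ∧
      (eCount E V1ᶜ V1 : ℝ)
        ≥ (eCount E A2 A1 : ℝ) + p * (eCount E A2 B : ℝ)
          + (1 - p) * (eCount E B A1 : ℝ) + p * (1 - p) * (eCount E B B : ℝ)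
          - ε * m := by
  set E' : V → V → Prop := fun u v => E v u
  have hc : 0 ≤ ε ^ 2 / 4 * m := by positivity
  have hvar := subsetExpect_sq_sub_fracCut_le_of_totDeg_le E A1 B hirr hp0 hp1 hc hdeg
  have hvar' := subsetExpect_sq_sub_fracCut_le_of_totDeg_le E' A1 B hirr hp0 hp1 hc
    fun v hv => (totDeg_swap E v).symm ▸ hdeg v hv
  rw [eCount_swap, ← hm] at hvar'
  rw [← hm] at hvar
  obtain ⟨S, hSB, hS⟩ := exists_le_of_subsetExpect_le hp0 hp1 (C := (ε * m) ^ 2)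
    (f := fun S => ((eCount E (A1 ∪ S) (A1 ∪ S)ᶜ : ℝ) - fracCut E (sideProb p A1 B)) ^ 2
      + ((eCount E' (A1 ∪ S) (A1 ∪ S)ᶜ : ℝ) - fracCut E' (sideProb p A1 B)) ^ 2)
    (by rw [subsetExpect_add]; linarith)
  have hεm : 0 ≤ ε * m := mul_nonneg hε.le m.cast_nonneg
  have h₁ := (abs_le_of_sq_le_sq' ((le_add_of_nonneg_right (sq_nonneg _)).trans hS) hεm).1
  have h₂ := (abs_le_of_sq_le_sq' ((le_add_of_nonneg_left (sq_nonneg _)).trans hS) hεm).1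
  rw [fracCut_sideProb E hA hB] at h₁
  rw [fracCut_sideProb E' hA hB] at h₂
  simp only [E', eCount_swap] at h₂
  refine ⟨A1 ∪ S, subset_union_left, fun x hx => ?_, by linarith, by linarith⟩
  have hxS : x ∉ S := fun h => by simpa [hB, hx] using hSB h
  simpa [hxS] using disjoint_right.1 hA hx
end

section
/- Let ε > 0 and let D = (V,E) be a directed graph with n vertices and m edges, where m ≥ 8ε⁻²n. Then there exists a bipartition V = V1 ∪ V2 such that min{e(V1,V2), e(V2,V1)} ≥ (1/4 − ε)m. -/
set_option maxHeartbeats 1000000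

open Finset

set_option linter.unusedSectionVars false

section Aux
variable {V : Type*} [Fintype V] [DecidableEq V]

/-- toggle the membership of `u` in `s`. -/
def tog (u : V) (s : Finset V) : Finset V := if u ∈ s then s.erase u else insert u s

lemma tog_tog (u : V) (s : Finset V) : tog u (tog u s) = s := by
  unfold tog; by_cases h : u ∈ s <;> simp [h]

lemma mem_tog_self (u : V) (s : Finset V) : u ∈ tog u s ↔ u ∉ s := by
  unfold tog; by_cases h : u ∈ s <;> simp [h]

lemma mem_tog_ne {v u : V} (h : v ≠ u) (s : Finset V) : v ∈ tog u s ↔ v ∈ s := by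
  unfold tog; by_cases hu : u ∈ s <;> simp [hu, h]

lemma card_filter_tog_eq (u : V) (p q : Finset V → Prop) [DecidablePred p] [DecidablePred q]
    (h1 : ∀ s, p s → q (tog u s)) (h2 : ∀ s, q s → p (tog u s)) :
    (univ.filter p).card = (univ.filter q).card := by
  apply Finset.card_bij' (fun s _ => tog u s) (fun s _ => tog u s)
  · intro a ha; simp only [mem_filter, mem_univ, true_and] at ha ⊢; exact h1 a ha
  · intro a ha; simp only [mem_filter, mem_univ, true_and] at ha ⊢; exact h2 a ha
  · intro a _; exact tog_tog u a
  · intro a _; exact tog_tog u a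

lemma two_mul_card_mem (u : V) :
    2 * (univ.filter fun s : Finset V => u ∈ s).card = 2 ^ Fintype.card V := by
  have h := Finset.card_filter_add_card_filter_not
    (s := (univ : Finset (Finset V))) (p := fun s => u ∈ s)
  have heq : (univ.filter fun s : Finset V => u ∈ s).card
      = (univ.filter fun s : Finset V => ¬ u ∈ s).card := by
    apply card_filter_tog_eq u
    · intro s hs; rw [mem_tog_self]; simp [hs]
    · intro s hs; rw [mem_tog_self]; simpa using hs
  rw [Finset.card_univ, Fintype.card_finset] at h
  omega

lemma four_mul_card_pair {u v : V} (huv : u ≠ v) :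
    4 * (univ.filter fun s : Finset V => u ∈ s ∧ v ∈ s).card = 2 ^ Fintype.card V := by
  have hAB : (univ.filter fun s : Finset V => u ∈ s ∧ v ∈ s).card
      = (univ.filter fun s : Finset V => u ∈ s ∧ v ∉ s).card := by
    apply card_filter_tog_eq v
    · intro s hs
      rw [mem_tog_ne huv, mem_tog_self]
      exact ⟨hs.1, by simp [hs.2]⟩
    · intro s hs
      rw [mem_tog_ne huv, mem_tog_self]
      exact ⟨hs.1, by simpa using hs.2⟩
  have hsplit : (univ.filter fun s : Finset V => u ∈ s ∧ v ∈ s).card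
      + (univ.filter fun s : Finset V => u ∈ s ∧ v ∉ s).card
      = (univ.filter fun s : Finset V => u ∈ s).card := by
    have h := Finset.card_filter_add_card_filter_not
      (s := (univ.filter fun s : Finset V => u ∈ s)) (p := fun s => v ∈ s)
    rwa [Finset.filter_filter, Finset.filter_filter] at h
  have h2 := two_mul_card_mem (V := V) u
  omega

/-- real indicator of membership. -/
noncomputable def chi (s : Finset V) (w : V) : ℝ := if w ∈ s then 1 else 0

lemma sum_chi (u : V) : ∑ s : Finset V, chi s u = 2 ^ Fintype.card V / 2 := by
  unfold chi
  rw [Finset.sum_boole]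
  have h := two_mul_card_mem (V := V) u
  have : ((univ.filter fun s : Finset V => u ∈ s).card : ℝ) * 2 = 2 ^ Fintype.card V := by
    exact_mod_cast by push_cast [← h]; ring
  linarith

lemma sum_chi_mul {u v : V} (huv : u ≠ v) :
    ∑ s : Finset V, chi s u * chi s v = 2 ^ Fintype.card V / 4 := by
  unfold chi
  have hpt : ∀ s : Finset V, (if u ∈ s then (1:ℝ) else 0) * (if v ∈ s then 1 else 0)
      = if u ∈ s ∧ v ∈ s then 1 else 0 := by
    intro s; by_cases h1 : u ∈ s <;> by_cases h2 : v ∈ s <;> simp [h1, h2]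
  simp only [hpt]
  rw [Finset.sum_boole]
  have h := four_mul_card_pair (V := V) huv
  have : ((univ.filter fun s : Finset V => u ∈ s ∧ v ∈ s).card : ℝ) * 4 = 2 ^ Fintype.card V := by
    exact_mod_cast by push_cast [← h]; ring
  linarith

lemma chi_sq (s : Finset V) (u : V) : chi s u * chi s u = chi s u := by
  unfold chi; by_cases h : u ∈ s <;> simp [h]

lemma chi_compl (s : Finset V) (u : V) : chi sᶜ u = 1 - chi s u := by
  unfold chi; by_cases h : u ∈ s <;> simp [h]

variable (E : V → V → Prop) [DecidableRel E]

lemma eCount_eq_sum (A B : Finset V) :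
    ((eCount E A B : ℝ))
      = ∑ p : V × V, (if E p.1 p.2 then (1:ℝ) else 0) * chi A p.1 * chi B p.2 := by
  rw [eCount, Finset.card_filter]
  push_cast
  rw [← Finset.sum_subset (Finset.subset_univ (A ×ˢ B))]
  · apply Finset.sum_congr rfl
    intro p hp
    rw [Finset.mem_product] at hp
    unfold chi
    simp [hp.1, hp.2]
  · intro p _ hp
    rw [Finset.mem_product, not_and_or] at hp
    unfold chi
    rcases hp with h | h <;> simp [h]

end Aux

/-- If a directed graph on `n` vertices has `m ≥ 8ε⁻²n` edges, then there is a
bipartition `V = V₁ ∪ V₂` with `min{e(V₁,V₂), e(V₂,V₁)} ≥ (1/4 - ε)m`. -/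
theorem stmt6 {V : Type*} [Fintype V] [DecidableEq V]
    (E : V → V → Prop) [DecidableRel E] (hirr : ∀ v, ¬ E v v)
    (ε : ℝ) (hε : 0 < ε)
    (n m : ℕ) (hn : n = Fintype.card V)
    (hm : m = eCount E Finset.univ Finset.univ)
    (hmn : (m : ℝ) ≥ 8 * ε⁻¹ ^ 2 * n) :
    ∃ V1 : Finset V,
      min ((eCount E V1 V1ᶜ : ℝ)) ((eCount E V1ᶜ V1 : ℝ)) ≥ (1 / 4 - ε) * m := by
  classical
  set N : ℝ := 2 ^ Fintype.card V with hN
  have hNpos : 0 < N := by positivity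
  set e : V × V → ℝ := fun p => if E p.1 p.2 then 1 else 0 with he
  set X : Finset V → ℝ := fun s => (eCount E s sᶜ : ℝ) with hX
  set Y : Finset V → ℝ := fun s => (eCount E sᶜ s : ℝ) with hY
  set od : V → ℝ := fun u => ((univ.filter fun v => E u v).card : ℝ) with hod
  set id' : V → ℝ := fun v => ((univ.filter fun u => E u v).card : ℝ) with hid
  set c : V → ℝ := fun w => od w - id' w with hc
  -- m as a sum
  have hmsum : (m : ℝ) = ∑ p : V × V, e p := by
    rw [hm, eCount, Finset.univ_product_univ, Finset.card_filter]
    push_cast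
    rfl
  -- degree identities
  have hsum_fst : ∀ f : V → ℝ, (∑ p : V × V, e p * f p.1) = ∑ u, od u * f u := by
    intro f
    rw [Fintype.sum_prod_type]
    apply Finset.sum_congr rfl
    intro u _
    have : ∑ v : V, e (u, v) * f u = (∑ v : V, e (u, v)) * f u := by
      rw [Finset.sum_mul]
    rw [this, he]
    simp only
    rw [Finset.sum_boole]
  have hsum_snd : ∀ f : V → ℝ, (∑ p : V × V, e p * f p.2) = ∑ v, id' v * f v := by
    intro f
    rw [Fintype.sum_prod_type_right]
    apply Finset.sum_congr rfl
    intro v _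
    have : ∑ u : V, e (u, v) * f v = (∑ u : V, e (u, v)) * f v := by
      rw [Finset.sum_mul]
    rw [this, he]
    simp only
    rw [Finset.sum_boole]
  have hsum_od : ∑ u, od u = (m : ℝ) := by
    have := hsum_fst (fun _ => 1)
    simpa [hmsum] using this.symm
  have hsum_id : ∑ v, id' v = (m : ℝ) := by
    have := hsum_snd (fun _ => 1)
    simpa [hmsum] using this.symm
  have hsum_c : ∑ w, c w = 0 := by
    simp only [hc, Finset.sum_sub_distrib, hsum_od, hsum_id, sub_self]
  -- X, Y as sums
  have hXs : ∀ s : Finset V, X s = ∑ p : V × V, e p * chi s p.1 * (1 - chi s p.2) := by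
    intro s
    rw [hX]
    simp only
    rw [eCount_eq_sum]
    apply Finset.sum_congr rfl
    intro p _
    rw [chi_compl]
  have hYs : ∀ s : Finset V, Y s = ∑ p : V × V, e p * (1 - chi s p.1) * chi s p.2 := by
    intro s
    rw [hY]
    simp only
    rw [eCount_eq_sum]
    apply Finset.sum_congr rfl
    intro p _
    rw [chi_compl]
  -- first moment
  have hsumXY : ∑ s : Finset V, (X s + Y s) = m * N / 2 := by
    have hpt : ∀ s : Finset V, X s + Y s
        = ∑ p : V × V, e p * (chi s p.1 + chi s p.2 - 2 * (chi s p.1 * chi s p.2)) := by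
      intro s
      rw [hXs s, hYs s, ← Finset.sum_add_distrib]
      apply Finset.sum_congr rfl
      intro p _
      ring
    simp only [hpt]
    rw [Finset.sum_comm]
    have hinner : ∀ p : V × V,
        (∑ s : Finset V, e p * (chi s p.1 + chi s p.2 - 2 * (chi s p.1 * chi s p.2)))
        = e p * (N / 2) := by
      intro p
      rw [← Finset.mul_sum]
      by_cases hE : E p.1 p.2
      · have hne : p.1 ≠ p.2 := by
          intro h
          exact hirr p.2 (h ▸ hE)
        congr 1
        rw [Finset.sum_sub_distrib, Finset.sum_add_distrib, ← Finset.mul_sum,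
          sum_chi, sum_chi, sum_chi_mul hne]
        ring
      · simp [he, hE]
    simp only [hinner]
    rw [← Finset.sum_mul, ← hmsum]
    ring
  -- X - Y as a vertex sum
  have hXY : ∀ s : Finset V, X s - Y s = ∑ w, c w * chi s w := by
    intro s
    have h1 : X s - Y s = ∑ p : V × V, e p * (chi s p.1 - chi s p.2) := by
      rw [hXs s, hYs s, ← Finset.sum_sub_distrib]
      apply Finset.sum_congr rfl
      intro p _
      ring
    have h2 : (∑ p : V × V, e p * (chi s p.1 - chi s p.2))
        = (∑ p : V × V, e p * chi s p.1) - ∑ p : V × V, e p * chi s p.2 := by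
      rw [← Finset.sum_sub_distrib]
      apply Finset.sum_congr rfl
      intro p _
      ring
    rw [h1, h2, hsum_fst (fun u => chi s u), hsum_snd (fun v => chi s v),
      ← Finset.sum_sub_distrib]
    apply Finset.sum_congr rfl
    intro w _
    rw [hc]
    ring
  -- second moment
  have hsumsq : ∑ s : Finset V, (X s - Y s) ^ 2 = (N / 4) * ∑ w, (c w) ^ 2 := by
    have hpt : ∀ s : Finset V, (X s - Y s) ^ 2
        = ∑ w, ∑ w', (c w * c w') * (chi s w * chi s w') := by
      intro s
      rw [hXY s, sq, Finset.sum_mul_sum]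
      apply Finset.sum_congr rfl
      intro w _
      apply Finset.sum_congr rfl
      intro w' _
      ring
    simp only [hpt]
    rw [Finset.sum_comm]
    have hinner : ∀ w : V,
        (∑ s : Finset V, ∑ w', (c w * c w') * (chi s w * chi s w'))
        = ∑ w', (c w * c w') * (if w = w' then N / 2 else N / 4) := by
      intro w
      rw [Finset.sum_comm]
      apply Finset.sum_congr rfl
      intro w' _
      rw [← Finset.mul_sum]
      congr 1
      by_cases hww : w = w'
      · subst hww
        simp only [if_pos rfl]
        calc ∑ s : Finset V, chi s w * chi s w = ∑ s : Finset V, chi s w := by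
              apply Finset.sum_congr rfl; intro s _; rw [chi_sq]
          _ = N / 2 := sum_chi w
      · rw [if_neg hww]
        exact sum_chi_mul hww
    simp only [hinner]
    have hsplit : ∀ w w' : V, (c w * c w') * (if w = w' then N / 2 else N / 4)
        = (c w * c w') * (N / 4) + (if w = w' then (c w * c w') * (N / 4) else 0) := by
      intro w w'
      by_cases h : w = w' <;> simp [h] <;> ring
    simp only [hsplit]
    have hrow : ∀ w : V,
        (∑ w', ((c w * c w') * (N / 4) + (if w = w' then (c w * c w') * (N / 4) else 0)))
        = (c w) ^ 2 * (N / 4) := by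
      intro w
      rw [Finset.sum_add_distrib]
      have h1 : ∑ w', (c w * c w') * (N / 4) = 0 := by
        have : ∀ w' : V, (c w * c w') * (N / 4) = (c w * (N / 4)) * c w' := by
          intro w'; ring
        simp only [this]
        rw [← Finset.mul_sum, hsum_c, mul_zero]
      have h2 : ∑ w', (if w = w' then (c w * c w') * (N / 4) else 0)
          = (c w * c w) * (N / 4) := by
        rw [Finset.sum_ite_eq]
        simp
      rw [h1, h2]
      ring
    simp only [hrow]
    rw [← Finset.sum_mul]
    ring
  -- bound on the sum of squares
  have hcsq : ∑ w, (c w) ^ 2 ≤ ε ^ 2 * m ^ 2 / 2 := by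
    have h8 : 8 * (n : ℝ) ≤ ε ^ 2 * m := by
      have h := hmn
      have hε2 : (0:ℝ) < ε ^ 2 := by positivity
      rw [inv_pow] at h
      calc 8 * (n : ℝ) = (8 * (ε ^ 2)⁻¹ * n) * ε ^ 2 := by
            field_simp
          _ ≤ m * ε ^ 2 := by
            apply mul_le_mul_of_nonneg_right h (le_of_lt hε2)
          _ = ε ^ 2 * m := by ring
    have hpt : ∀ w : V, (c w) ^ 2 ≤ 2 * (n : ℝ) * (od w + id' w) := by
      intro w
      have ho : od w ≤ (n : ℝ) := by
        rw [hod, hn]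
        simp only
        have := Finset.card_filter_le (univ : Finset V) (fun v => E w v)
        rw [Finset.card_univ] at this
        exact_mod_cast this
      have hi : id' w ≤ (n : ℝ) := by
        rw [hid, hn]
        simp only
        have := Finset.card_filter_le (univ : Finset V) (fun u => E u w)
        rw [Finset.card_univ] at this
        exact_mod_cast this
      have ho0 : 0 ≤ od w := by rw [hod]; positivity
      have hi0 : 0 ≤ id' w := by rw [hid]; positivity
      have hcw : c w = od w - id' w := rfl
      rw [hcw]
      nlinarith [mul_nonneg ho0 hi0,
        mul_le_mul_of_nonneg_right (add_le_add ho hi) (add_nonneg ho0 hi0)]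
    calc ∑ w, (c w) ^ 2 ≤ ∑ w, 2 * (n : ℝ) * (od w + id' w) :=
          Finset.sum_le_sum fun w _ => hpt w
      _ = 2 * (n : ℝ) * ((∑ w, od w) + ∑ w, id' w) := by
          rw [← Finset.mul_sum, Finset.sum_add_distrib]
      _ = 4 * (n : ℝ) * m := by rw [hsum_od, hsum_id]; ring
      _ ≤ ε ^ 2 * m ^ 2 / 2 := by
          have hm0 : (0:ℝ) ≤ m := Nat.cast_nonneg m
          nlinarith
  -- Cauchy-Schwarz
  have hNcard : ((Fintype.card (Finset V) : ℝ)) = N := by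
    rw [Fintype.card_finset, hN]
    push_cast
    ring
  have hCS : (∑ s : Finset V, |X s - Y s|) ^ 2
      ≤ N * ∑ s : Finset V, (X s - Y s) ^ 2 := by
    have h2 := Finset.sum_mul_sq_le_sq_mul_sq univ (fun _ : Finset V => (1:ℝ))
      (fun s => |X s - Y s|)
    simp only [one_mul, one_pow] at h2
    have habs : ∀ s : Finset V, |X s - Y s| ^ 2 = (X s - Y s) ^ 2 := fun s => sq_abs _
    simp only [habs] at h2
    calc (∑ s : Finset V, |X s - Y s|) ^ 2
        ≤ (∑ _s : Finset V, (1:ℝ)) * ∑ s : Finset V, (X s - Y s) ^ 2 := h2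
      _ = N * ∑ s : Finset V, (X s - Y s) ^ 2 := by
          rw [Finset.sum_const, Finset.card_univ, nsmul_eq_mul, mul_one, hNcard]
  have hAbound : ∑ s : Finset V, |X s - Y s| ≤ N * ε * m := by
    have hA0 : 0 ≤ ∑ s : Finset V, |X s - Y s| :=
      Finset.sum_nonneg fun s _ => abs_nonneg _
    have hB0 : 0 ≤ N * ε * m := by positivity
    have hsq : (∑ s : Finset V, |X s - Y s|) ^ 2 ≤ (N * ε * m) ^ 2 := by
      calc (∑ s : Finset V, |X s - Y s|) ^ 2
          ≤ N * ∑ s : Finset V, (X s - Y s) ^ 2 := hCS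
        _ = N * ((N / 4) * ∑ w, (c w) ^ 2) := by rw [hsumsq]
        _ ≤ N * ((N / 4) * (ε ^ 2 * m ^ 2 / 2)) := by
            apply mul_le_mul_of_nonneg_left _ (le_of_lt hNpos)
            apply mul_le_mul_of_nonneg_left hcsq
            positivity
        _ ≤ (N * ε * m) ^ 2 := by nlinarith
    nlinarith
  -- sum of minima
  have hminform : ∀ s : Finset V, min (X s) (Y s) = (X s + Y s) / 2 - |X s - Y s| / 2 := by
    intro s
    rcases le_total (X s) (Y s) with h | h
    · rw [min_eq_left h, abs_of_nonpos (by linarith)]; ring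
    · rw [min_eq_right h, abs_of_nonneg (by linarith)]; ring
  have hsummin : N * ((1 / 4 - ε) * m) ≤ ∑ s : Finset V, min (X s) (Y s) := by
    have hm0 : (0:ℝ) ≤ m := Nat.cast_nonneg m
    calc N * ((1 / 4 - ε) * m)
        ≤ (m * N / 2) / 2 - (N * ε * m) / 2 := by
          nlinarith [mul_nonneg (mul_nonneg hNpos.le hε.le) hm0]
      _ ≤ (∑ s : Finset V, (X s + Y s)) / 2 - (∑ s : Finset V, |X s - Y s|) / 2 := by
          rw [hsumXY]
          linarith [hAbound]
      _ = ∑ s : Finset V, min (X s) (Y s) := by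
          simp only [hminform]
          rw [Finset.sum_sub_distrib, ← Finset.sum_div, ← Finset.sum_div]
  -- extract a good bipartition
  have hnonempty : (univ : Finset (Finset V)).Nonempty := ⟨∅, Finset.mem_univ ∅⟩
  have hconst : ∑ _s : Finset V, (1 / 4 - ε) * (m:ℝ) = N * ((1 / 4 - ε) * m) := by
    rw [Finset.sum_const, Finset.card_univ, nsmul_eq_mul, hNcard]
  have hex : ∃ s ∈ (univ : Finset (Finset V)),
      (1 / 4 - ε) * (m:ℝ) ≤ min (X s) (Y s) := by
    apply Finset.exists_le_of_sum_le hnonempty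
    rw [hconst]
    exact hsummin
  obtain ⟨s, _, hs⟩ := hex
  exact ⟨s, hs⟩
end

section
/- Let G be an undirected graph and fix a matching {e1,…,es} of maximum size which, among all maximum matchings, maximizes the number of free vertices in the set W of unmatched vertices. Then there is a bijective correspondence between the tight components of G and the non-free vertices of W: every tight component contains exactly one non-free vertex of W, and every non-free vertex of W lies in a tight component. -/
/-- A graph is *tight* if it is connected and for every vertex `v`, the induced
subgraph on the complement of `v` has a perfect matching, and every perfect
matching of it has the property that no matching edge has exactly one endpoint
adjacent to `v`. -/
def IsTight {V : Type*} (G : SimpleGraph V) : Prop :=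
  G.Connected ∧ ∀ v : V,
    (∃ M : (G.induce {u | u ≠ v}).Subgraph, M.IsPerfectMatching) ∧
    ∀ M : (G.induce {u | u ≠ v}).Subgraph, M.IsPerfectMatching →
      ∀ a b : {u | u ≠ v}, M.Adj a b → (G.Adj v ↑a ↔ G.Adj v ↑b)

/-- `w` (unmatched by `M`) is a *free* vertex: it has a free neighbor, i.e. a
vertex `a` of some matching edge `ab` with `w` adjacent to `a` but not `b`. -/
def IsFreeVertex {V : Type*} (G : SimpleGraph V) (M : G.Subgraph) (w : V) : Prop :=
  ∃ a b, M.Adj a b ∧ G.Adj w a ∧ ¬ G.Adj w b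

/-
Call `N` an exposing matching for `v` if it arises from `M` by letting `v` be unmatched in place
of the unmatched vertex `w`, while every other free unmatched vertex of `M` stays free. When `w`
is non-free, free-maximality of `M` forces the exposed vertex `v` to be non-free in `N`. So if `z`
is adjacent to `v`, then `z` is matched in `N` (by maximality) to some `z'` which is also adjacent
to `v`, and trading the edge `zz'` for `vz'` exposes `z`. Hence every vertex of the component of
`w` can be exposed, which gives both conditions of tightness: a perfect matching of the component
minus `v`, and, since any such perfect matching glued to `M` outside the component exposes `v`,
non-freeness of `v` with respect to it.

Conversely, a tight component has odd order, so contains a vertex `u` unmatched by `M`. Gluing a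
perfect matching of the component minus `u` to `M` outside shows, by maximality, that all other
vertices of the component are matched by `M`, within the component; tightness applied to this
restriction of `M` says that `u` is non-free.
-/

open Set

namespace SimpleGraph

variable {V : Type*} {G : SimpleGraph V}

namespace Subgraph

variable {M N Q : G.Subgraph} {s : Set V} {a b v w x z z' : V}

lemma IsMatching.deleteVerts (hM : M.IsMatching) (hs : ∀ ⦃x y⦄, M.Adj x y → y ∈ s → x ∈ s) :
    (M.deleteVerts s).IsMatching := by
  rintro v ⟨hv, hvs⟩
  obtain ⟨p, hp, hup⟩ := hM hv
  have hps : p ∉ s := fun h => hvs (hs hp h)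
  exact ⟨p, deleteVerts_adj.mpr ⟨hv, hvs, M.edge_vert hp.symm, hps, hp⟩,
    fun y hy => hup y (deleteVerts_adj.mp hy).2.2.2.2⟩

lemma IsMatching.deleteVerts_supp_sup (hM : M.IsMatching) (hQ : Q.IsMatching)
    {c : G.ConnectedComponent} (hQc : Q.verts ⊆ c.supp) :
    (M.deleteVerts c.supp ⊔ Q).IsMatching := by
  refine (hM.deleteVerts fun x y hxy hy => c.mem_supp_of_adj_mem_supp hy (M.adj_sub hxy).symm).sup
    hQ (disjoint_of_subset (support_subset_verts _) (support_subset_verts _) ?_)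
  rw [deleteVerts_verts]
  exact Set.disjoint_left.mpr fun x hx hxQ => hx.2 (hQc hxQ)

lemma IsMatching.exists_swap (hN : N.IsMatching) (hzz' : N.Adj z z') (hx : x ∉ N.verts)
    (hxz' : G.Adj x z') :
    ∃ N' : G.Subgraph, N'.IsMatching ∧ N'.verts = insert x N.verts \ {z} ∧ N'.Adj z' x ∧
      ∀ a b, N.Adj a b → a ≠ z → a ≠ z' → N'.Adj a b := by
  have hz := N.edge_vert hzz'
  have hxz : x ≠ z := fun h => hx (h ▸ hz)
  have hpair : ∀ ⦃a b⦄, N.Adj a b → b ∈ ({z, z'} : Set V) → a ∈ ({z, z'} : Set V) := by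
    rintro a b hab (rfl | rfl)
    · exact .inr (hN.eq_of_adj_right hab hzz'.symm)
    · exact .inl (hN.eq_of_adj_right hab hzz')
  refine ⟨N.deleteVerts {z, z'} ⊔ G.subgraphOfAdj hxz', ?_, ?_, ?_, ?_⟩
  · refine (hN.deleteVerts hpair).sup (.subgraphOfAdj hxz')
      (disjoint_of_subset (support_subset_verts _) (support_subset_verts _) ?_)
    rw [deleteVerts_verts, subgraphOfAdj_verts, disjoint_right]
    rintro a (rfl | rfl)
    exacts [fun h => hx h.1, fun h => h.2 (.inr rfl)]
  · ext u
    simp only [verts_sup, deleteVerts_verts, subgraphOfAdj_verts, mem_union, mem_sdiff,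
      mem_insert_iff, mem_singleton_iff]
    grind [N.edge_vert hzz'.symm, (N.adj_sub hzz').ne]
  · exact sup_adj.mpr (.inr (by simp [Sym2.eq_swap]))
  · intro a b hab haz haz'
    have hb : b ∉ ({z, z'} : Set V) := fun hb => (hpair hab hb).elim haz haz'
    have ha : a ∉ ({z, z'} : Set V) := fun ha => ha.elim haz haz'
    exact sup_adj.mpr
      (.inl (deleteVerts_adj.mpr ⟨N.edge_vert hab, ha, N.edge_vert hab.symm, hb, hab⟩))

lemma IsMatching.even_ncard [Finite V] (hM : M.IsMatching) : Even M.verts.ncard := by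
  have := Fintype.ofFinite M.verts
  rw [ncard_eq_toFinset_card']
  exact hM.even_card

def IsMaximumMatching (M : G.Subgraph) : Prop :=
  M.IsMatching ∧ ∀ M' : G.Subgraph, M'.IsMatching → M'.verts.ncard ≤ M.verts.ncard

lemma IsMaximumMatching.of_ncard_eq (hM : M.IsMaximumMatching) (hN : N.IsMatching)
    (h : N.verts.ncard = M.verts.ncard) : N.IsMaximumMatching :=
  ⟨hN, fun M' hM' => h ▸ hM.2 M' hM'⟩

lemma IsMaximumMatching.mem_verts_of_subset [Finite V] (hM : M.IsMaximumMatching)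
    (hN : N.IsMatching) (hMN : M.verts ⊆ N.verts) (hx : x ∈ N.verts) : x ∈ M.verts := by
  by_contra hxM
  have hlt := ncard_lt_ncard ((ssubset_iff_of_subset hMN).mpr ⟨x, hx, hxM⟩)
  exact (hM.2 N hN).not_gt hlt

lemma IsMaximumMatching.not_adj [Finite V] (hM : M.IsMaximumMatching) (ha : a ∉ M.verts)
    (hb : b ∉ M.verts) : ¬G.Adj a b := by
  intro hab
  have hdisj : Disjoint M.support (G.subgraphOfAdj hab).support := by
    rw [hM.1.support_eq_verts]
    refine disjoint_of_subset_right (support_subset_verts _) ?_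
    rw [subgraphOfAdj_verts, disjoint_right]
    rintro _ (rfl | rfl)
    exacts [ha, hb]
  exact ha (hM.mem_verts_of_subset (hM.1.sup (.subgraphOfAdj hab) hdisj) subset_union_left
    (.inr (by simp)))

lemma IsMaximumMatching.mem_insert_of_verts_eq [Finite V] (hM : M.IsMaximumMatching)
    (hw : w ∉ M.verts) (hN : N.IsMatching) (hNv : N.verts = insert w M.verts \ {v}) :
    v ∈ insert w M.verts := by
  by_contra hv
  rw [sdiff_singleton_eq_self hv] at hNv
  exact hw (hM.mem_verts_of_subset hN (hNv ▸ subset_insert _ _) (hNv ▸ mem_insert _ _))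

lemma IsMaximumMatching.ncard_eq_of_verts_eq [Finite V] (hM : M.IsMaximumMatching)
    (hw : w ∉ M.verts) (hN : N.IsMatching) (hNv : N.verts = insert w M.verts \ {v}) :
    N.verts.ncard = M.verts.ncard := by
  have h := ncard_sdiff_singleton_add_one (hM.mem_insert_of_verts_eq hw hN hNv)
  rw [ncard_insert_of_notMem hw, ← hNv] at h
  omega

def MaximizesFreeVertices (M : G.Subgraph) : Prop :=
  ∀ M' : G.Subgraph, M'.IsMatching → M'.verts.ncard = M.verts.ncard →
    {u | u ∉ M'.verts ∧ IsFreeVertex G M' u}.ncard ≤ {u | u ∉ M.verts ∧ IsFreeVertex G M u}.ncard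

def IsExposingMatching (M : G.Subgraph) (w v : V) (N : G.Subgraph) : Prop :=
  N.IsMatching ∧ N.verts = insert w M.verts \ {v} ∧
    ∀ u ∉ insert w M.verts, IsFreeVertex G M u → IsFreeVertex G N u

lemma IsExposingMatching.self (hM : M.IsMatching) (hw : w ∉ M.verts) :
    M.IsExposingMatching w w M :=
  ⟨hM, (insert_sdiff_self_of_notMem hw).symm, fun _ _ h => h⟩

section Exposing

variable [Finite V]

lemma IsExposingMatching.mem_insert (hM : M.IsMaximumMatching) (hw : w ∉ M.verts)
    (hN : M.IsExposingMatching w v N) : v ∈ insert w M.verts :=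
  hM.mem_insert_of_verts_eq hw hN.1 hN.2.1

lemma IsExposingMatching.isMaximumMatching (hM : M.IsMaximumMatching) (hw : w ∉ M.verts)
    (hN : M.IsExposingMatching w v N) : N.IsMaximumMatching :=
  hM.of_ncard_eq hN.1 (hM.ncard_eq_of_verts_eq hw hN.1 hN.2.1)

lemma IsExposingMatching.not_isFreeVertex (hM : M.IsMaximumMatching)
    (hfree : M.MaximizesFreeVertices) (hw : w ∉ M.verts) (hwf : ¬IsFreeVertex G M w)
    (hN : M.IsExposingMatching w v N) : ¬IsFreeVertex G N v := by
  intro hv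
  have hvN : v ∉ N.verts := by simp [hN.2.1]
  have hsub : insert v {u | u ∉ M.verts ∧ IsFreeVertex G M u} ⊆
      {u | u ∉ N.verts ∧ IsFreeVertex G N u} := by
    rintro u (rfl | ⟨huM, huf⟩)
    · exact ⟨hvN, hv⟩
    · have hu : u ∉ insert w M.verts := by
        rintro (rfl | hu)
        exacts [hwf huf, huM hu]
      exact ⟨by simp [hN.2.1, hu], hN.2.2 u hu huf⟩
  have hvM : v ∉ {u | u ∉ M.verts ∧ IsFreeVertex G M u} := by
    rintro ⟨hvM, hvf⟩
    rcases hN.mem_insert hM hw with rfl | hv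
    exacts [hwf hvf, hvM hv]
  have hlt := ncard_lt_ncard ((ssubset_insert hvM).trans_subset hsub)
  exact (hfree N hN.1 (hM.ncard_eq_of_verts_eq hw hN.1 hN.2.1)).not_gt hlt

lemma IsExposingMatching.exists_of_adj (hM : M.IsMaximumMatching)
    (hfree : M.MaximizesFreeVertices) (hw : w ∉ M.verts) (hwf : ¬IsFreeVertex G M w)
    (hN : M.IsExposingMatching w x N) (hxz : G.Adj x z) : ∃ N', M.IsExposingMatching w z N' := by
  have hNmax := hN.isMaximumMatching hM hw
  have hxN : x ∉ N.verts := by simp [hN.2.1]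
  have hz : z ∈ N.verts := by_contra fun hz => hNmax.not_adj hxN hz hxz
  obtain ⟨z', hzz', -⟩ := hN.1 hz
  have hxz' : G.Adj x z' := by_contra fun h =>
    hN.not_isFreeVertex hM hfree hw hwf ⟨z, z', hzz', hxz, h⟩
  obtain ⟨N', hN', hN'v, hz'x, hNN'⟩ := hN.1.exists_swap hzz' hxN hxz'
  have hN'v' : N'.verts = insert w M.verts \ {z} := by
    rw [hN'v, hN.2.1]
    ext u
    have hx := hN.mem_insert hM hw
    simp only [mem_sdiff, mem_insert_iff, mem_singleton_iff]
    grind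
  have hN'max := hNmax.of_ncard_eq hN' (by
    rw [hM.ncard_eq_of_verts_eq hw hN' hN'v', hM.ncard_eq_of_verts_eq hw hN.1 hN.2.1])
  refine ⟨N', hN', hN'v', fun u hu huf => ?_⟩
  obtain ⟨a, b, hab, hua, hub⟩ := hN.2.2 u hu huf
  have hux : ¬G.Adj u x := hNmax.not_adj (by simp [hN.2.1, hu]) hxN
  have huz : ¬G.Adj u z := hN'max.not_adj (by simp [hN'v', hu]) (by simp [hN'v'])
  by_cases haz' : a = z'
  · exact ⟨z', x, hz'x, haz' ▸ hua, hux⟩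
  · exact ⟨a, b, hNN' a b hab (fun h => huz (h ▸ hua)) haz', hua, hub⟩

lemma exists_isExposingMatching_of_reachable (hM : M.IsMaximumMatching)
    (hfree : M.MaximizesFreeVertices) (hw : w ∉ M.verts) (hwf : ¬IsFreeVertex G M w)
    (h : G.Reachable w v) : ∃ N, M.IsExposingMatching w v N := by
  rw [reachable_iff_reflTransGen] at h
  induction h with
  | refl => exact ⟨M, .self hM.1 hw⟩
  | tail _ hxz ih =>
    obtain ⟨N, hN⟩ := ih
    exact hN.exists_of_adj hM hfree hw hwf hxz

end Exposing

lemma isExposingMatching_deleteVerts_supp_sup {c : G.ConnectedComponent} (hM : M.IsMatching)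
    (hcM : c.supp ⊆ insert w M.verts) (hwc : w ∈ c.supp) (hvc : v ∈ c.supp) (hQ : Q.IsMatching)
    (hQv : Q.verts = c.supp \ {v}) :
    M.IsExposingMatching w v (M.deleteVerts c.supp ⊔ Q) := by
  refine ⟨hM.deleteVerts_supp_sup hQ (hQv ▸ sdiff_subset), ?_, fun u hu ⟨a, b, hab, hua, hub⟩ => ?_⟩
  · rw [verts_sup, deleteVerts_verts, hQv]
    ext u
    have hu := @hcM u
    simp only [mem_union, mem_sdiff, mem_insert_iff, mem_singleton_iff] at hu ⊢
    grind
  · have huc : u ∉ c.supp := fun h => hu (hcM h)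
    have hac : a ∉ c.supp := fun h => huc (c.mem_supp_of_adj_mem_supp h hua.symm)
    have hbc : b ∉ c.supp := fun h => hac (c.mem_supp_of_adj_mem_supp h (M.adj_sub hab).symm)
    exact ⟨a, b, .inl (deleteVerts_adj.mpr ⟨M.edge_vert hab, hac, M.edge_vert hab.symm, hbc, hab⟩),
      hua, hub⟩

end Subgraph

open Subgraph

variable {s : Set V} {v : s}

lemma exists_isMatching_of_isPerfectMatching_induce_ne
    {P : ((G.induce s).induce {u | u ≠ v}).Subgraph} (hP : P.IsPerfectMatching) :
    ∃ Q : G.Subgraph, Q.IsMatching ∧ Q.verts = s \ {(v : V)} ∧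
      ∀ a b : {u | u ≠ v}, P.Adj a b → Q.Adj a.1 b.1 := by
  let e : (G.induce s).induce {u | u ≠ v} ↪g G := (Embedding.induce _).trans (Embedding.induce s)
  refine ⟨P.map e.toHom, hP.1.map e.toHom e.injective, ?_, fun a b hab => ⟨a, b, hab, rfl, rfl⟩⟩
  ext x
  rw [map_verts, hP.2.verts_eq_univ, image_univ]
  constructor
  · rintro ⟨a, rfl⟩
    exact ⟨a.1.2, fun h => a.2 (Subtype.ext h)⟩
  · rintro ⟨hxs, hxv⟩
    exact ⟨⟨⟨x, hxs⟩, fun h => hxv (congrArg Subtype.val h)⟩, rfl⟩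

lemma exists_isPerfectMatching_induce_ne_of_isMatching {M : G.Subgraph} (hM : M.IsMatching)
    (hsM : s \ {(v : V)} ⊆ M.verts) (hvM : (v : V) ∉ M.verts)
    (hs : ∀ ⦃x y⦄, M.Adj x y → x ∈ s → y ∈ s) :
    ∃ P : ((G.induce s).induce {u | u ≠ v}).Subgraph, P.IsPerfectMatching ∧
      ∀ a b : {u | u ≠ v}, M.Adj a.1 b.1 → P.Adj a b := by
  let e : (G.induce s).induce {u | u ≠ v} ↪g G := (Embedding.induce _).trans (Embedding.induce s)
  refine ⟨M.comap e.toHom, isPerfectMatching_iff.mpr fun a => ?_, fun a b h => ⟨M.adj_sub h, h⟩⟩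
  have ha : (a.1 : V) ∈ s \ {(v : V)} := ⟨a.1.2, fun h => a.2 (Subtype.ext h)⟩
  obtain ⟨y, hy, huy⟩ := hM (hsM ha)
  have hyv : y ≠ v := fun h => hvM (h ▸ M.edge_vert hy.symm)
  refine ⟨⟨⟨y, hs hy ha.1⟩, fun h => hyv (congrArg Subtype.val h)⟩, ⟨M.adj_sub hy, hy⟩, ?_⟩
  exact fun b hb => Subtype.ext (Subtype.ext (huy _ hb.2))

namespace Subgraph

variable [Finite V] {M : G.Subgraph} {c : G.ConnectedComponent} {w : V}

lemma IsMatching.exists_mem_supp_notMem_verts_of_isTight (hM : M.IsMatching)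
    (ht : IsTight (G.induce c.supp)) : ∃ u ∈ c.supp, u ∉ M.verts := by
  by_contra! hcM
  obtain ⟨v, hv⟩ := c.nonempty_supp
  obtain ⟨P, hP⟩ := (ht.2 ⟨v, hv⟩).1
  obtain ⟨Q, hQ, hQv, -⟩ := exists_isMatching_of_isPerfectMatching_induce_ne hP
  have hodd : Even (c.supp \ {v}).ncard := hQv ▸ hQ.even_ncard
  have heven : Even c.supp.ncard := by
    have hMc : M.verts ∩ c.supp = c.supp := inter_eq_right.mpr hcM
    simpa [hMc] using (hM.induce_connectedComponent c).even_ncard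
  rw [← ncard_sdiff_singleton_add_one hv] at heven
  exact Nat.even_add_one.mp heven hodd

lemma IsMaximumMatching.existsUnique_of_isTight (hM : M.IsMaximumMatching)
    (ht : IsTight (G.induce c.supp)) :
    ∃! w : V, w ∈ c.supp ∧ w ∉ M.verts ∧ ¬IsFreeVertex G M w := by
  obtain ⟨u, huc, huM⟩ := hM.1.exists_mem_supp_notMem_verts_of_isTight ht
  have hcM : c.supp \ {u} ⊆ M.verts := by
    obtain ⟨P, hP⟩ := (ht.2 ⟨u, huc⟩).1
    obtain ⟨Q, hQ, hQv, -⟩ := exists_isMatching_of_isPerfectMatching_induce_ne hP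
    have hMQ : M.verts ⊆ (M.deleteVerts c.supp ⊔ Q).verts := by
      intro x hx
      by_cases hxc : x ∈ c.supp
      · exact .inr (hQv ▸ ⟨hxc, fun (h : x = u) => huM (h ▸ hx)⟩)
      · exact .inl ⟨hx, hxc⟩
    exact fun y hy => hM.mem_verts_of_subset (hM.1.deleteVerts_supp_sup hQ (hQv ▸ sdiff_subset))
      hMQ (.inr (hQv ▸ hy))
  refine ⟨u, ⟨huc, huM, ?_⟩, fun y ⟨hyc, hyM, _⟩ => by_contra fun hyu => hyM (hcM ⟨hyc, hyu⟩)⟩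
  rintro ⟨a, b, hab, hua, hub⟩
  obtain ⟨P, hP, hMP⟩ := exists_isPerfectMatching_induce_ne_of_isMatching (v := ⟨u, huc⟩) hM.1
    hcM huM fun x y hxy hx => c.mem_supp_of_adj_mem_supp hx (M.adj_sub hxy)
  have hac : a ∈ c.supp := c.mem_supp_of_adj_mem_supp huc hua
  have hbc : b ∈ c.supp := c.mem_supp_of_adj_mem_supp hac (M.adj_sub hab)
  have hau : a ≠ u := fun h => huM (h ▸ M.edge_vert hab)
  have hbu : b ≠ u := fun h => huM (h ▸ M.edge_vert hab.symm)
  have hPab := hMP ⟨⟨a, hac⟩, fun h => hau (congrArg Subtype.val h)⟩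
    ⟨⟨b, hbc⟩, fun h => hbu (congrArg Subtype.val h)⟩ hab
  exact hub (((ht.2 ⟨u, huc⟩).2 P hP _ _ hPab).mp hua)

lemma IsMaximumMatching.isTight_of_not_isFreeVertex (hM : M.IsMaximumMatching)
    (hfree : M.MaximizesFreeVertices) (hw : w ∉ M.verts) (hwf : ¬IsFreeVertex G M w) :
    IsTight (G.induce (G.connectedComponentMk w).supp) := by
  set c := G.connectedComponentMk w
  have hwc : w ∈ c.supp := rfl
  have hexp (v) (hv : v ∈ c.supp) : ∃ N, M.IsExposingMatching w v N :=
    exists_isExposingMatching_of_reachable hM hfree hw hwf (c.reachable_of_mem_supp hwc hv)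
  have hcM : c.supp ⊆ insert w M.verts := fun v hv =>
    (hexp v hv).elim fun _ hN => hN.mem_insert hM hw
  refine ⟨c.connected_toSimpleGraph, fun v => ⟨?_, fun P hP a b hab => ?_⟩⟩
  · obtain ⟨N, hN, hNv, -⟩ := hexp v v.2
    obtain ⟨P, hP, -⟩ := exists_isPerfectMatching_induce_ne_of_isMatching hN
      (hNv ▸ sdiff_subset_sdiff_left hcM) (by simp [hNv])
      fun x y hxy hx => c.mem_supp_of_adj_mem_supp hx (N.adj_sub hxy)
    exact ⟨P, hP⟩
  · obtain ⟨Q, hQ, hQv, hPQ⟩ := exists_isMatching_of_isPerfectMatching_induce_ne hP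
    have hnf := (isExposingMatching_deleteVerts_supp_sup hM.1 hcM hwc v.2 hQ hQv).not_isFreeVertex
      hM hfree hw hwf
    have hadj : (M.deleteVerts c.supp ⊔ Q).Adj a.1 b.1 := .inr (hPQ a b hab)
    exact ⟨fun hva => by_contra fun hvb => hnf ⟨_, _, hadj, hva, hvb⟩,
      fun hvb => by_contra fun hva => hnf ⟨_, _, hadj.symm, hvb, hva⟩⟩

end Subgraph

end SimpleGraph

/-- Given a maximum matching which, among maximum matchings, maximizes the
number of free unmatched vertices, there is a bijective correspondence between
tight components and non-free unmatched vertices: every tight component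
contains exactly one non-free unmatched vertex, and every non-free unmatched
vertex lies in a tight component. -/
theorem stmt14 {V : Type*} [Fintype V] (G : SimpleGraph V)
    (M : G.Subgraph) (hM : M.IsMatching)
    (hmax : ∀ M' : G.Subgraph, M'.IsMatching → M'.verts.ncard ≤ M.verts.ncard)
    (hfree : ∀ M' : G.Subgraph, M'.IsMatching →
      M'.verts.ncard = M.verts.ncard →
      {w : V | w ∉ M'.verts ∧ IsFreeVertex G M' w}.ncard
        ≤ {w : V | w ∉ M.verts ∧ IsFreeVertex G M w}.ncard) :
    (∀ c : G.ConnectedComponent, IsTight (G.induce c.supp) →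
      ∃! w : V, w ∈ c.supp ∧ w ∉ M.verts ∧ ¬ IsFreeVertex G M w) ∧
    (∀ w : V, w ∉ M.verts → ¬ IsFreeVertex G M w →
      IsTight (G.induce (G.connectedComponentMk w).supp)) := by
  have hMmax : M.IsMaximumMatching := ⟨hM, hmax⟩
  exact ⟨fun c ht => hMmax.existsUnique_of_isTight ht,
    fun w hw hwf => hMmax.isTight_of_not_isFreeVertex hfree hw hwf⟩
end

section
/- Every connected undirected graph with n vertices and m edges admits a bipartition V = V1 ∪ V2 with e(V1,V2) ≥ m/2 + (n−1)/4. -/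
/-!
Induction on the number of vertices, tracking the surplus `4 e(A, s \ A) + 1 - 2 e(G[s]) - |s|`
of a vertex set `s` and a side `A ⊆ s`. A vertex with `k` neighbours in `s`, added to the side
holding fewer of them, raises the cut by `⌈k/2⌉`: the surplus grows by `1` if `k` is odd and
drops by at most `1` if `k` is even.

Let `x₀ x₁ x₂ …` be a longest path in a connected graph with at least two vertices. All
neighbours of `x₀` lie on the path, so `G - x₀` is connected; if `deg x₀` is odd, delete `x₀`,
apply induction and add it back. Otherwise we may assume that no odd vertex leaves `G` connected
when deleted, so there are no leaves. Then a neighbour `a` of `x₁` off the path has another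
neighbour, which lies on the longest path `a x₁ x₂ …`, so `G - x₀ - x₁` is connected. Adding
back `x₀`, which has the odd number `deg x₀ - 1` of neighbours there, and then `x₁` changes the
surplus by `+1 - 1`.
-/

open Finset

namespace SimpleGraph

section Interedges

variable {V : Type*} (G : SimpleGraph V) [DecidableRel G.Adj]

theorem card_interedges_comm (s t : Finset V) :
    #(G.interedges s t) = #(G.interedges t s) :=
  haveI := G.symm
  Rel.card_interedges_comm s t

theorem card_interedges_univ [Fintype V] :
    #(G.interedges univ univ) = 2 * #G.edgeFinset := by
  rw [← dart_card_eq_twice_card_edges, interedges_def, univ_product_univ,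
    ← Fintype.card_subtype]
  exact Fintype.card_congr
    ⟨fun e => ⟨e.1, e.2⟩, fun d => ⟨d.toProd, d.adj⟩, fun _ => rfl, fun _ => rfl⟩

variable [Fintype V] [DecidableEq V] {v : V}

theorem card_interedges_singleton_left (t : Finset V) :
    #(G.interedges {v} t) = #(G.neighborFinset v ∩ t) := by
  have : G.interedges {v} t = {v} ×ˢ (G.neighborFinset v ∩ t) := by
    ext ⟨a, b⟩
    simp only [mem_interedges_iff, mem_singleton, mem_product, mem_inter, mem_neighborFinset]
    constructor <;> rintro ⟨rfl, h₁, h₂⟩ <;> exact ⟨rfl, h₂, h₁⟩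
  rw [this, card_product, card_singleton, one_mul]

theorem card_interedges_insert_left {s : Finset V} (hv : v ∉ s) (t : Finset V) :
    #(G.interedges (insert v s) t) = #(G.interedges s t) + #(G.neighborFinset v ∩ t) := by
  have : G.interedges (insert v s) t = G.interedges {v} t ∪ G.interedges s t := by
    simp only [interedges_def, insert_eq, union_product, filter_union]
  rw [this, card_union_of_disjoint (G.interedges_disjoint_left (disjoint_singleton_left.2 hv) t),
    add_comm, card_interedges_singleton_left]

theorem card_interedges_insert_right (s : Finset V) {t : Finset V} (hv : v ∉ t) :
    #(G.interedges s (insert v t)) = #(G.interedges s t) + #(G.neighborFinset v ∩ s) := by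
  rw [card_interedges_comm, card_interedges_insert_left G hv, card_interedges_comm]

theorem card_interedges_insert_self {s : Finset V} (hv : v ∉ s) :
    #(G.interedges (insert v s) (insert v s)) =
      #(G.interedges s s) + 2 * #(G.neighborFinset v ∩ s) := by
  rw [card_interedges_insert_left G hv, card_interedges_insert_right G s hv,
    inter_insert_of_notMem (G.notMem_neighborFinset_self v)]
  ring

end Interedges

section Surplus

variable {V : Type*} [DecidableEq V] (G : SimpleGraph V) [DecidableRel G.Adj]

/-- `#(G.interedges s s)` counts ordered pairs, so it is `2 m` for the `m` edges of `G[s]`;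
with `n = #s`, nonnegativity of the surplus says `e(A, s \ A) ≥ m / 2 + (n - 1) / 4`. -/
def edwardsSurplus (s A : Finset V) : ℤ :=
  4 * #(G.interedges A (s \ A)) + 1 - #(G.interedges s s) - #s

theorem edwardsSurplus_induce (s : Set V) [DecidableRel (G.induce s).Adj] (t A : Finset s) :
    (G.induce s).edwardsSurplus t A =
      G.edwardsSurplus (t.map (.subtype _)) (A.map (.subtype _)) := by
  have card_interedges (X Y : Finset s) : #((G.induce s).interedges X Y) =
      #(G.interedges (X.map (.subtype _)) (Y.map (.subtype _))) := by
    rw [← card_map ((Function.Embedding.subtype _).prodMap (.subtype _))]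
    congr 1
    ext ⟨a, b⟩
    simp [mem_interedges_iff]
  simp only [edwardsSurplus, card_interedges, Finset.map_sdiff, card_map]

variable [Fintype V] {v : V} {s A : Finset V}

theorem exists_card_interedges_insert (hv : v ∉ s) (hA : A ⊆ s) :
    ∃ A' ⊆ insert v s, #(G.interedges A (s \ A)) + (#(G.neighborFinset v ∩ s) + 1) / 2 ≤
      #(G.interedges A' (insert v s \ A')) := by
  have hsplit : #(G.neighborFinset v ∩ A) + #(G.neighborFinset v ∩ (s \ A)) =
      #(G.neighborFinset v ∩ s) := by
    rw [← card_union_of_disjoint (disjoint_sdiff.mono inter_subset_right inter_subset_right),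
      ← inter_union_distrib_left, union_sdiff_of_subset hA]
  have hvA : v ∉ A := fun h => hv (hA h)
  by_cases h : #(G.neighborFinset v ∩ A) ≤ #(G.neighborFinset v ∩ (s \ A))
  · refine ⟨insert v A, insert_subset_insert v hA, ?_⟩
    rw [insert_sdiff_insert, sdiff_insert_of_notMem hv,
      card_interedges_insert_left G hvA]
    omega
  · refine ⟨A, hA.trans (subset_insert v s), ?_⟩
    rw [insert_sdiff_of_notMem s hvA,
      card_interedges_insert_right G A (fun h => hv (sdiff_subset h))]
    omega

theorem exists_edwardsSurplus_insert (hv : v ∉ s) (hA : A ⊆ s) :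
    ∃ A' ⊆ insert v s, G.edwardsSurplus s A + 4 * ((#(G.neighborFinset v ∩ s) + 1) / 2 : ℕ)
      - 2 * #(G.neighborFinset v ∩ s) - 1 ≤ G.edwardsSurplus (insert v s) A' := by
  obtain ⟨A', hA's, hA'⟩ := exists_card_interedges_insert G hv hA
  refine ⟨A', hA's, ?_⟩
  simp only [edwardsSurplus, card_interedges_insert_self G hv, card_insert_of_notMem hv]
  push_cast
  omega

theorem exists_edwardsSurplus_insert_ge_sub_one (hv : v ∉ s) (hA : A ⊆ s) :
    ∃ A' ⊆ insert v s, G.edwardsSurplus s A - 1 ≤ G.edwardsSurplus (insert v s) A' := by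
  obtain ⟨A', hA's, hA'⟩ := exists_edwardsSurplus_insert G hv hA
  exact ⟨A', hA's, by omega⟩

theorem exists_edwardsSurplus_insert_ge_add_one (hv : v ∉ s) (hA : A ⊆ s)
    (hodd : Odd #(G.neighborFinset v ∩ s)) :
    ∃ A' ⊆ insert v s, G.edwardsSurplus s A + 1 ≤ G.edwardsSurplus (insert v s) A' := by
  obtain ⟨A', hA's, hA'⟩ := exists_edwardsSurplus_insert G hv hA
  obtain ⟨k, hk⟩ := hodd
  exact ⟨A', hA's, by rw [hk] at hA'; omega⟩

end Surplus

section LongestPath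

variable {V : Type*} {G : SimpleGraph V}

theorem Walk.IsPath.mem_support_of_adj_of_forall_length_le {u v a : V} {p : G.Walk u v}
    (hp : p.IsPath) (hmax : ∀ (x y : V) (q : G.Walk x y), q.IsPath → q.length ≤ p.length)
    (ha : G.Adj a u) : a ∈ p.support := by
  by_contra h
  have := hmax _ _ _ (hp.cons h (h := ha))
  simp at this

theorem Walk.reachable_induce_of_mem_support [DecidableEq V] {s : Set V} {u v a : V}
    (w : G.Walk u v) (hw : ∀ x ∈ w.support, x ∈ s) (ha : a ∈ w.support) :
    (G.induce s).Reachable ⟨u, hw u w.start_mem_support⟩ ⟨a, hw a ha⟩ :=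
  ⟨(w.takeUntil a ha).induce s fun _ hx => hw _ (w.support_takeUntil_subset_support ha hx)⟩

theorem Connected.induce_of_forall_adj_reachable (hG : G.Connected) {s : Set V} {c : V}
    (hc : c ∈ s)
    (h : ∀ a : s, ∀ b ∉ s, G.Adj a b → (G.induce s).Reachable a ⟨c, hc⟩) :
    (G.induce s).Connected := by
  have key : ∀ {x : V} (w : G.Walk x c) (hx : x ∈ s),
      (G.induce s).Reachable ⟨x, hx⟩ ⟨c, hc⟩ := by
    intro x w
    induction w with
    | nil => exact fun _ => .rfl
    | @cons x y _ hxy _ ih =>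
      intro hx
      by_cases hy : y ∈ s
      · exact (induce_adj.2 hxy : (G.induce s).Adj ⟨x, hx⟩ ⟨y, hy⟩).reachable.trans
          (ih hc h hy)
      · exact h ⟨x, hx⟩ y hy hxy
  exact (connected_iff_exists_forall_reachable _).2
    ⟨⟨c, hc⟩, fun x => (key (hG.preconnected x c).some x.2).symm⟩

theorem Walk.IsPath.connected_induce_compl_start_of_forall_length_le [DecidableEq V]
    (hG : G.Connected) {x₀ x₁ y : V} {h : G.Adj x₀ x₁} {p : G.Walk x₁ y}
    (hp : (cons h p).IsPath)
    (hmax : ∀ (x y : V) (q : G.Walk x y), q.IsPath → q.length ≤ (cons h p).length) :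
    (G.induce {x₀}ᶜ).Connected := by
  have hps : ∀ x ∈ p.support, x ∈ ({x₀}ᶜ : Set V) := fun x hx hx₀ =>
    ((cons_isPath_iff _ _).1 hp).2 (Set.mem_singleton_iff.1 hx₀ ▸ hx)
  refine hG.induce_of_forall_adj_reachable (hps x₁ p.start_mem_support) fun a b hb hab => ?_
  obtain rfl : b = x₀ := not_not.1 hb
  have ha : (a : V) ∈ p.support := by
    have := hp.mem_support_of_adj_of_forall_length_le hmax hab
    rw [support_cons, List.mem_cons] at this
    exact this.resolve_left a.2
  exact (p.reachable_induce_of_mem_support hps ha).symm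

variable [Fintype V] [DecidableRel G.Adj]

theorem Walk.IsPath.degree_le_length_of_forall_length_le {u v : V} {p : G.Walk u v}
    (hp : p.IsPath) (hmax : ∀ (x y : V) (q : G.Walk x y), q.IsPath → q.length ≤ p.length) :
    G.degree u ≤ p.length := by
  classical
  have hsub : G.neighborFinset u ⊆ p.support.tail.toFinset := fun a ha => by
    have ha := (mem_neighborFinset _ _ _).1 ha
    exact List.mem_toFinset.2 (((mem_support_iff p).1
      (hp.mem_support_of_adj_of_forall_length_le hmax ha.symm)).resolve_left ha.ne')
  calc G.degree u = #(G.neighborFinset u) := (card_neighborFinset_eq_degree G u).symm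
    _ ≤ #p.support.tail.toFinset := card_le_card hsub
    _ ≤ p.support.tail.length := List.toFinset_card_le _
    _ = p.length := by simp

theorem Walk.IsPath.connected_induce_compl_start_pair_of_forall_length_le [DecidableEq V]
    (hG : G.Connected) (hleaf : ∀ a, G.degree a ≠ 1) {x₀ x₁ x₂ y : V}
    {h₀₁ : G.Adj x₀ x₁} {h₁₂ : G.Adj x₁ x₂} {p : G.Walk x₂ y} (hp : (cons h₀₁ (cons h₁₂ p)).IsPath)
    (hmax : ∀ (x y : V) (q : G.Walk x y), q.IsPath →
      q.length ≤ (cons h₀₁ (cons h₁₂ p)).length) :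
    (G.induce {x₀, x₁}ᶜ).Connected := by
  have hp₁ := ((cons_isPath_iff _ _).1 hp).1
  have hx₀ : x₀ ∉ p.support := fun h => ((cons_isPath_iff _ _).1 hp).2 (by simp [h])
  have hx₁ : x₁ ∉ p.support := ((cons_isPath_iff _ _).1 hp₁).2
  have hps : ∀ x ∈ p.support, x ∈ ({x₀, x₁}ᶜ : Set V) := by
    rintro x hx (rfl | rfl) <;> contradiction
  refine hG.induce_of_forall_adj_reachable (hps x₂ p.start_mem_support) fun a b hb hab => ?_
  have ha : (a : V) ≠ x₀ ∧ (a : V) ≠ x₁ := not_or.1 a.2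
  suffices (a : V) ∈ p.support ∨ ∃ a' ∈ p.support, G.Adj a a' by
    rcases this with ha | ⟨a', ha', haa'⟩
    · exact (p.reachable_induce_of_mem_support hps ha).symm
    · exact (induce_adj.2 haa' : (G.induce _).Adj a ⟨a', hps a' ha'⟩).reachable.trans
        (p.reachable_induce_of_mem_support hps ha').symm
  obtain rfl | rfl : b = x₀ ∨ b = x₁ := not_not.1 hb
  · left
    simpa [ha.2, hab.ne] using hp.mem_support_of_adj_of_forall_length_le hmax hab
  by_cases hap : (a : V) ∈ p.support
  · exact .inl hap
  right
  -- `a x₁ x₂ …` is again a longest path, so all neighbours of `a` lie on it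
  have hq : (cons hab (cons h₁₂ p)).IsPath := hp₁.cons (by simp [ha.2, hap])
  have hqmax : ∀ (x y : V) (q : G.Walk x y), q.IsPath →
      q.length ≤ (cons hab (cons h₁₂ p)).length :=
    fun x y q hq => by simpa using hmax x y q hq
  have hdeg : 1 < #(G.neighborFinset a) := by
    have := hab.degree_pos_left; have := hleaf a; rw [card_neighborFinset_eq_degree]; omega
  obtain ⟨a', ha', ha'ne⟩ := exists_mem_ne hdeg b
  have haa' := (mem_neighborFinset _ _ _).1 ha'
  refine ⟨a', ?_, haa'⟩
  simpa [ha'ne, haa'.ne'] using hq.mem_support_of_adj_of_forall_length_le hqmax haa'.symm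

theorem Connected.exists_nonseparating_odd_vertex_or_edge [Nontrivial V] (hG : G.Connected) :
    (∃ v, Odd (G.degree v) ∧ (G.induce {v}ᶜ).Connected) ∨
      ∃ u w, G.Adj u w ∧ Even (G.degree u) ∧ (G.induce {u, w}ᶜ).Connected := by
  classical
  by_cases hodd : ∃ v, Odd (G.degree v) ∧ (G.induce {v}ᶜ).Connected
  · exact .inl hodd
  push Not at hodd
  have hleaf (a : V) : G.degree a ≠ 1 := fun ha =>
    hodd a (ha ▸ odd_one) (hG.induce_compl_singleton_of_degree_eq_one ha)
  obtain ⟨x₀, y, p, hp, hmax⟩ := Walk.exists_isPath_forall_isPath_length_le_length G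
  have hlen : 2 ≤ p.length := by
    have := hG.preconnected.degree_pos_of_nontrivial x₀
    have := hleaf x₀
    have := hp.degree_le_length_of_forall_length_le hmax
    omega
  rcases p with _ | ⟨h₀₁, _ | ⟨h₁₂, p⟩⟩
  · simp at hlen
  · simp at hlen
  have heven : Even (G.degree x₀) := Nat.not_odd_iff_even.1 fun h =>
    hodd x₀ h (hp.connected_induce_compl_start_of_forall_length_le hG hmax)
  exact .inr ⟨x₀, _, h₀₁, heven,
    hp.connected_induce_compl_start_pair_of_forall_length_le hG hleaf hmax⟩

end LongestPath

theorem edwardsSurplus_univ_empty_nonneg {V : Type*} [Fintype V] [Subsingleton V] [DecidableEq V]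
    (G : SimpleGraph V) [DecidableRel G.Adj] : 0 ≤ G.edwardsSurplus univ ∅ := by
  have hE : G.interedges univ univ = ∅ := eq_empty_of_forall_notMem fun e he =>
    (G.mem_interedges_iff.1 he).2.2.ne (Subsingleton.elim _ _)
  have hV : #(univ : Finset V) ≤ 1 := Fintype.card_le_one_iff_subsingleton.2 ‹_›
  simp only [edwardsSurplus, hE, interedges_empty_left, card_empty]
  omega

theorem exists_edwardsSurplus_nonneg {V : Type*} [Fintype V] [DecidableEq V] (G : SimpleGraph V)
    [DecidableRel G.Adj] (hG : G.Connected) : ∃ A : Finset V, 0 ≤ G.edwardsSurplus univ A := by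
  refine Fintype.induction_subsingleton_or_nontrivial (P := fun V _ => ∀ [DecidableEq V]
    (G : SimpleGraph V) [DecidableRel G.Adj], G.Connected → ∃ A, 0 ≤ G.edwardsSurplus univ A)
    V (fun V _ _ _ G _ _ => ⟨∅, G.edwardsSurplus_univ_empty_nonneg⟩) ?_ G hG
  intro V _ _ ih _ G _ hG
  classical
  have ih' (t : Finset V) (ht : (G.induce (t : Set V)).Connected) {x : V} (hx : x ∉ t) :
      ∃ A ⊆ t, 0 ≤ G.edwardsSurplus t A := by
    obtain ⟨A, hA⟩ := ih t (Fintype.card_subtype_lt hx) (G.induce t) ht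
    rw [edwardsSurplus_induce, univ_map_subtype] at hA
    simp only [mem_coe, filter_univ_mem] at hA
    exact ⟨_, coe_subset.1 (map_subtype_subset A), hA⟩
  rcases hG.exists_nonseparating_odd_vertex_or_edge with
    ⟨v, hodd, hconn⟩ | ⟨u, w, huw, heven, hconn⟩
  · have ht : ((univ.erase v : Finset V) : Set V) = {v}ᶜ := by ext; simp
    obtain ⟨A, hA, hA0⟩ := ih' (univ.erase v) (ht ▸ hconn) (notMem_erase v univ)
    obtain ⟨A', -, hA'⟩ := G.exists_edwardsSurplus_insert_ge_add_one (notMem_erase v univ) hA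
      (by simpa [inter_erase] using hodd)
    rw [insert_erase (mem_univ v)] at hA'
    exact ⟨A', by omega⟩
  · have ht : (((univ.erase w).erase u : Finset V) : Set V) = {u, w}ᶜ := by ext; simp [and_comm]
    have hodd : Odd #(G.neighborFinset u ∩ (univ.erase w).erase u) := by
      rw [inter_erase, erase_eq_of_notMem (by simp), inter_erase, inter_univ,
        card_erase_of_mem ((G.mem_neighborFinset u w).2 huw), card_neighborFinset_eq_degree]
      exact Nat.Even.sub_odd huw.degree_pos_left heven odd_one
    obtain ⟨A, hA, hA0⟩ := ih' ((univ.erase w).erase u) (ht ▸ hconn) (notMem_erase u _)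
    obtain ⟨A₁, hA₁, hA₁0⟩ :=
      G.exists_edwardsSurplus_insert_ge_add_one (notMem_erase u _) hA hodd
    rw [insert_erase (mem_erase.2 ⟨huw.ne, mem_univ u⟩)] at hA₁ hA₁0
    obtain ⟨A₂, -, hA₂0⟩ :=
      G.exists_edwardsSurplus_insert_ge_sub_one (notMem_erase w _) hA₁
    rw [insert_erase (mem_univ w)] at hA₂0
    exact ⟨A₂, by omega⟩

end SimpleGraph

/-- Every connected graph with `n` vertices and `m` edges admits a bipartition
`V = V₁ ∪ V₂` with `e(V₁,V₂) ≥ m/2 + (n−1)/4`. -/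
theorem stmt16 {V : Type*} [Fintype V] [DecidableEq V]
    (G : SimpleGraph V) [DecidableRel G.Adj] (hconn : G.Connected)
    (n m : ℕ) (hn : n = Fintype.card V) (hm : m = G.edgeFinset.card) :
    ∃ V1 : Finset V,
      ((((V1 ×ˢ V1ᶜ).filter fun p => G.Adj p.1 p.2).card : ℝ)
        ≥ (m : ℝ) / 2 + ((n : ℝ) - 1) / 4) := by
  obtain ⟨A, hA⟩ := G.exists_edwardsSurplus_nonneg hconn
  refine ⟨A, ?_⟩
  rw [SimpleGraph.edwardsSurplus, SimpleGraph.card_interedges_univ, card_univ,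
    ← compl_eq_univ_sdiff] at hA
  have hA' := (Int.cast_le (R := ℝ)).2 hA
  push_cast at hA'
  change (#(G.interedges A Aᶜ) : ℝ) ≥ _
  subst hn hm
  linarith
end
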